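/- arXiv:0705.0694 — 5 statements merged into one kernel-verified Lean document; each statement's English description precedes it below -/
import Mathlib

section
/- Let V be an oriented 2-dimensional real inner product space with rotation j by π/2, let T be a finite-dimensional real inner product space, and for each v ∈ V let B_v : T → W be a linear map into an inner product space W (depending linearly on v). Assume the Lagrangian condition ᵗB_v ∘ B_{jv} = ᵗB_{jv} ∘ B_v and the isometry condition ᵗB_v ∘ B_v + ᵗB_{jv} ∘ B_{jv} = Id for every unit vector v ∈ V. Then for a fixed unit vector v₁ and v = cos θ · v₁ + sin θ · j v₁, one has ᵗB_v ∘ B_v = cos 2θ · (ᵗB_{v₁} ∘ B_{v₁}) + sin 2θ · (ᵗB_{j v₁} ∘ B_{v₁}) + sin²θ · Id. -/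
open LinearMap

/-! At `θ = 0` the two conditions say that `ᵗB₁ ∘ B₂ = ᵗB₂ ∘ B₁` and
`ᵗB₂ ∘ B₂ = Id - ᵗB₁ ∘ B₁`. Expanding `ᵗB_v ∘ B_v` bilinearly in `(cos θ, sin θ)` and
substituting these gives the formula by the double-angle identities. -/

section

variable {T W : Type*}
  [NormedAddCommGroup T] [InnerProductSpace ℝ T] [FiniteDimensional ℝ T]
  [NormedAddCommGroup W] [InnerProductSpace ℝ W] [FiniteDimensional ℝ W]

theorem adjoint_comp_self_smul_add_smul (B₁ B₂ : T →ₗ[ℝ] W) (a b : ℝ) :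
    adjoint (a • B₁ + b • B₂) ∘ₗ (a • B₁ + b • B₂)
      = a ^ 2 • (adjoint B₁ ∘ₗ B₁)
        + (a * b) • (adjoint B₁ ∘ₗ B₂ + adjoint B₂ ∘ₗ B₁)
        + b ^ 2 • (adjoint B₂ ∘ₗ B₂) := by
  simp only [map_add, map_smul, add_comp, comp_add, smul_comp, comp_smul]
  module

end

/-- For a Lagrangian isometric family of operators `B_v` parametrized by the
unit vectors `v = cos θ • v₁ + sin θ • j v₁` of an oriented 2-plane (with `B₁ = B_{v₁}`,
`B₂ = B_{j v₁}` and `B_v = cos θ • B₁ + sin θ • B₂`, `B_{jv} = -sin θ • B₁ + cos θ • B₂`),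
satisfying the Lagrangian condition `ᵗB_v ∘ B_{jv} = ᵗB_{jv} ∘ B_v` and the isometry
condition `ᵗB_v ∘ B_v + ᵗB_{jv} ∘ B_{jv} = Id` for every unit vector `v`, one has
`ᵗB_v ∘ B_v = cos 2θ • (ᵗB₁ ∘ B₁) + sin 2θ • (ᵗB₂ ∘ B₁) + sin²θ • Id`. -/
theorem stmt0 {T W : Type*}
    [NormedAddCommGroup T] [InnerProductSpace ℝ T] [FiniteDimensional ℝ T]
    [NormedAddCommGroup W] [InnerProductSpace ℝ W] [FiniteDimensional ℝ W]
    (B₁ B₂ : T →ₗ[ℝ] W)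
    (hLag : ∀ θ : ℝ,
      (adjoint (Real.cos θ • B₁ + Real.sin θ • B₂)) ∘ₗ
          ((-Real.sin θ) • B₁ + Real.cos θ • B₂)
        = (adjoint ((-Real.sin θ) • B₁ + Real.cos θ • B₂)) ∘ₗ
          (Real.cos θ • B₁ + Real.sin θ • B₂))
    (hIso : ∀ θ : ℝ,
      (adjoint (Real.cos θ • B₁ + Real.sin θ • B₂)) ∘ₗ
          (Real.cos θ • B₁ + Real.sin θ • B₂)
        + (adjoint ((-Real.sin θ) • B₁ + Real.cos θ • B₂)) ∘ₗ
          ((-Real.sin θ) • B₁ + Real.cos θ • B₂)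
        = LinearMap.id) :
    ∀ θ : ℝ,
      (adjoint (Real.cos θ • B₁ + Real.sin θ • B₂)) ∘ₗ
          (Real.cos θ • B₁ + Real.sin θ • B₂)
        = Real.cos (2 * θ) • ((adjoint B₁) ∘ₗ B₁)
          + Real.sin (2 * θ) • ((adjoint B₂) ∘ₗ B₁)
          + (Real.sin θ) ^ 2 • (LinearMap.id : T →ₗ[ℝ] T) := by
  intro θ
  have hsymm : adjoint B₁ ∘ₗ B₂ = adjoint B₂ ∘ₗ B₁ := by simpa using hLag 0
  have hsum : adjoint B₁ ∘ₗ B₁ + adjoint B₂ ∘ₗ B₂ = LinearMap.id := by simpa using hIso 0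
  rw [adjoint_comp_self_smul_add_smul, hsymm, eq_sub_of_add_eq' hsum, Real.sin_two_mul,
    Real.cos_two_mul']
  module
end

section
/- Let V be an oriented 2-dimensional real inner product space with rotation j by π/2, T a finite-dimensional real inner product space, and B_v : T → W linear maps (linear in v) satisfying ᵗB_v ∘ B_{jv} = ᵗB_{jv} ∘ B_v and ᵗB_v ∘ B_v + ᵗB_{jv} ∘ B_{jv} = Id for all unit vectors v. Fix a unit vector v₁ and let v = cos θ · v₁ + sin θ · j v₁ with 0 < θ < π. Then for every X ∈ ker B_v and Y ∈ ker B_{v₁} one has ⟨X, Y⟩ = 0; that is, ker B_v is orthogonal to ker B_{v₁}. -/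
open LinearMap

/-! With `B = B_v` and `C = B_{jv}`, the isometry condition gives
`⟪X, Y⟫ = ⟪B X, B Y⟫ + ⟪C X, C Y⟫`, which is `⟪C X, C Y⟫` for `X ∈ ker B`. For `Y ∈ ker B_{v₁}`
the vectors `sin θ • C Y` and `cos θ • B Y` agree, and the Lagrangian condition turns
`⟪C X, B Y⟫` into `⟪B X, C Y⟫ = 0`; since `sin θ ≠ 0`, `⟪C X, C Y⟫ = 0`. -/

section PairOfMaps

variable {𝕜 T W : Type*} [RCLike 𝕜]
  [NormedAddCommGroup T] [InnerProductSpace 𝕜 T] [FiniteDimensional 𝕜 T]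
  [NormedAddCommGroup W] [InnerProductSpace 𝕜 W] [FiniteDimensional 𝕜 W]
  {B C : T →ₗ[𝕜] W}

theorem inner_apply_apply_comm_of_adjoint_comp_eq (hLag : adjoint B ∘ₗ C = adjoint C ∘ₗ B)
    (X Y : T) : inner 𝕜 (C X) (B Y) = inner 𝕜 (B X) (C Y) := by
  simpa only [comp_apply, adjoint_inner_left] using
    congrArg (fun f : T →ₗ[𝕜] T => inner 𝕜 (f X) Y) hLag

theorem inner_eq_add_of_adjoint_comp_add_eq_id
    (hIso : adjoint B ∘ₗ B + adjoint C ∘ₗ C = LinearMap.id) (X Y : T) :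
    inner 𝕜 X Y = inner 𝕜 (B X) (B Y) + inner 𝕜 (C X) (C Y) := by
  simpa only [LinearMap.add_apply, comp_apply, id_apply, inner_add_left, adjoint_inner_left] using
    (congrArg (fun f : T →ₗ[𝕜] T => inner 𝕜 (f X) Y) hIso).symm

theorem inner_eq_zero_of_apply_eq_zero_of_smul_eq_smul
    (hLag : adjoint B ∘ₗ C = adjoint C ∘ₗ B)
    (hIso : adjoint B ∘ₗ B + adjoint C ∘ₗ C = LinearMap.id)
    {X Y : T} (hX : B X = 0) {a b : 𝕜} (ha : a ≠ 0) (hY : a • C Y = b • B Y) :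
    inner 𝕜 X Y = 0 := by
  have hCB : inner 𝕜 (C X) (B Y) = 0 := by
    rw [inner_apply_apply_comm_of_adjoint_comp_eq hLag, hX, inner_zero_left]
  have hCC : a * inner 𝕜 (C X) (C Y) = 0 := by
    rw [← inner_smul_right, hY, inner_smul_right, hCB, mul_zero]
  rw [inner_eq_add_of_adjoint_comp_add_eq_id hIso, hX, inner_zero_left, zero_add]
  exact (mul_eq_zero.mp hCC).resolve_left ha

end PairOfMaps

/-- Here `B₁ = B_{v₁}` and `B₂ = B_{j v₁}`, so that `B_v = cos θ • B₁ + sin θ • B₂` and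
`B_{jv} = -sin θ • B₁ + cos θ • B₂`. -/
theorem stmt1 {T W : Type*}
    [NormedAddCommGroup T] [InnerProductSpace ℝ T] [FiniteDimensional ℝ T]
    [NormedAddCommGroup W] [InnerProductSpace ℝ W] [FiniteDimensional ℝ W]
    (B₁ B₂ : T →ₗ[ℝ] W)
    (hLag : ∀ θ : ℝ,
      (adjoint (Real.cos θ • B₁ + Real.sin θ • B₂)) ∘ₗ
          ((-Real.sin θ) • B₁ + Real.cos θ • B₂)
        = (adjoint ((-Real.sin θ) • B₁ + Real.cos θ • B₂)) ∘ₗ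
          (Real.cos θ • B₁ + Real.sin θ • B₂))
    (hIso : ∀ θ : ℝ,
      (adjoint (Real.cos θ • B₁ + Real.sin θ • B₂)) ∘ₗ
          (Real.cos θ • B₁ + Real.sin θ • B₂)
        + (adjoint ((-Real.sin θ) • B₁ + Real.cos θ • B₂)) ∘ₗ
          ((-Real.sin θ) • B₁ + Real.cos θ • B₂)
        = LinearMap.id) :
    ∀ θ : ℝ, 0 < θ → θ < Real.pi →
      ∀ X Y : T, (Real.cos θ • B₁ + Real.sin θ • B₂) X = 0 → B₁ Y = 0 →
        (inner ℝ X Y : ℝ) = 0 := by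
  intro θ hθ hθπ X Y hX hY
  have hsin : Real.sin θ ≠ 0 := (Real.sin_pos_of_pos_of_lt_pi hθ hθπ).ne'
  have hYrel : Real.sin θ • ((-Real.sin θ) • B₁ + Real.cos θ • B₂) Y
      = Real.cos θ • (Real.cos θ • B₁ + Real.sin θ • B₂) Y := by
    simp only [LinearMap.add_apply, LinearMap.smul_apply, hY, smul_zero, zero_add, smul_smul, mul_comm]
  exact inner_eq_zero_of_apply_eq_zero_of_smul_eq_smul (hLag θ) (hIso θ) hX hsin hYrel
end

section
/- Let V be an oriented 2-dimensional real inner product space with rotation j by π/2, T an n-dimensional real inner product space, W an n-dimensional real inner product space, and B_v : T → W linear maps, linear in v ∈ V, satisfying ᵗB_v ∘ B_{jv} = ᵗB_{jv} ∘ B_v and ᵗB_v ∘ B_v + ᵗB_{jv} ∘ B_{jv} = Id for all unit vectors v. Then the set of unit vectors v ∈ V for which B_v fails to be a linear isomorphism is finite. -/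
/-!
Write a unit vector `w` as `c v + s (j v)`. If `B_v X = 0` and `B_w Y = 0`, the two identities
give `⟪B_{jv} X, B_v Y⟫ = ⟪ᵗB_v B_{jv} X, Y⟫ = ⟪ᵗB_{jv} B_v X, Y⟫ = 0` and
`⟪B_{jv} X, B_{jv} Y⟫ = ⟪X - ᵗB_v B_v X, Y⟫ = ⟪X, Y⟫`, so `0 = ⟪B_{jv} X, B_w Y⟫ = s ⟪X, Y⟫`.
Hence the kernels of `B_v` and `B_w` are orthogonal unless `w = ±v`. Nonzero pairwise orthogonal
subspaces of a finite-dimensional space are finitely many, and each kernel is shared only by `±v`.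
-/

open LinearMap

theorem Submodule.finite_of_pairwise_isOrtho {𝕜 E : Type*} [RCLike 𝕜] [NormedAddCommGroup E]
    [InnerProductSpace 𝕜 E] [FiniteDimensional 𝕜 E] {𝒦 : Set (Submodule 𝕜 E)}
    (hortho : 𝒦.Pairwise (· ⟂ ·)) (hbot : ⊥ ∉ 𝒦) : 𝒦.Finite := by
  have hindep : iSupIndep ((↑) : 𝒦 → Submodule 𝕜 E) :=
    (OrthogonalFamily.of_pairwise fun K L hKL =>
      hortho K.2 L.2 (Subtype.coe_ne_coe.mpr hKL)).independent
  let := hindep.fintypeNeBotOfFiniteDimensional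
  exact Set.finite_coe_iff.mp <| Finite.of_equiv _
    (Equiv.subtypeUnivEquiv fun K : 𝒦 => ne_of_mem_of_not_mem K.2 hbot)

theorem LinearMap.ker_isOrtho_ker_smul_add_smul {𝕜 T W : Type*} [RCLike 𝕜]
    [NormedAddCommGroup T] [InnerProductSpace 𝕜 T] [FiniteDimensional 𝕜 T]
    [NormedAddCommGroup W] [InnerProductSpace 𝕜 W] [FiniteDimensional 𝕜 W]
    {P Q : T →ₗ[𝕜] W} (hcomm : adjoint P ∘ₗ Q = adjoint Q ∘ₗ P)
    (hsum : adjoint P ∘ₗ P + adjoint Q ∘ₗ Q = id) (c : 𝕜) {s : 𝕜} (hs : s ≠ 0) :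
    ker P ⟂ ker (c • P + s • Q) := by
  rw [Submodule.isOrtho_iff_inner_eq]
  intro X hX Y hY
  rw [mem_ker] at hX hY
  have hQP : inner 𝕜 (Q X) (P Y) = 0 := by
    rw [← adjoint_inner_left, ← comp_apply, hcomm, comp_apply, hX, map_zero, inner_zero_left]
  have hQQ : inner 𝕜 (Q X) (Q Y) = inner 𝕜 X Y := by
    have hX' : adjoint Q (Q X) = X := by simpa [hX] using congr($hsum X)
    rw [← adjoint_inner_left, hX']
  have h : inner 𝕜 (Q X) ((c • P + s • Q) Y) = 0 := by rw [hY, inner_zero_right]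
  rw [add_apply, smul_apply, smul_apply, inner_add_right, inner_smul_right, inner_smul_right,
    hQP, hQQ, mul_zero, zero_add] at h
  exact (mul_eq_zero.mp h).resolve_left hs

theorem EuclideanSpace.exists_eq_smul_add_smul_rotation {v w u : EuclideanSpace ℝ (Fin 2)}
    (hu : WithLp.ofLp u = ![-(v 1), v 0]) (hv : ‖v‖ = 1) (hw : ‖w‖ = 1)
    (h₁ : w ≠ v) (h₂ : w ≠ -v) : ∃ c s : ℝ, s ≠ 0 ∧ w = c • v + s • u := by
  have hv2 : v 0 ^ 2 + v 1 ^ 2 = 1 := by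
    simpa [Fin.sum_univ_two, hv] using (EuclideanSpace.real_norm_sq_eq v).symm
  have hw2 : w 0 ^ 2 + w 1 ^ 2 = 1 := by
    simpa [Fin.sum_univ_two, hw] using (EuclideanSpace.real_norm_sq_eq w).symm
  have hu0 : u 0 = -v 1 := congrFun hu 0
  have hu1 : u 1 = v 0 := congrFun hu 1
  set c := w 0 * v 0 + w 1 * v 1
  set s := w 1 * v 0 - w 0 * v 1
  have hdecomp : w = c • v + s • u := by
    ext i
    fin_cases i
    · simp only [Fin.zero_eta, Fin.isValue, PiLp.add_apply, PiLp.smul_apply, smul_eq_mul, hu0,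
        mul_neg, c, s]
      linear_combination (-(w 0)) * hv2
    · simp only [Fin.mk_one, Fin.isValue, PiLp.add_apply, PiLp.smul_apply, smul_eq_mul, hu1,
        c, s]
      linear_combination (-(w 1)) * hv2
  refine ⟨c, s, fun hs => ?_, hdecomp⟩
  have hc : c ^ 2 = 1 := by linear_combination (-s) * hs + (v 0 ^ 2 + v 1 ^ 2) * hw2 + hv2
  rw [hs, zero_smul, add_zero] at hdecomp
  rcases sq_eq_one_iff.mp hc with h | h
  · exact h₁ (by rw [hdecomp, h, one_smul])
  · exact h₂ (by rw [hdecomp, h, neg_one_smul])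

/-- Let `V = ℝ²` (oriented, with rotation `j` by `π/2`), `T`, `W`
`n`-dimensional real inner product spaces, and `B : V →ₗ (T →ₗ W)` a family of linear
maps, linear in `v`, satisfying `ᵗB_v ∘ B_{jv} = ᵗB_{jv} ∘ B_v` and
`ᵗB_v ∘ B_v + ᵗB_{jv} ∘ B_{jv} = Id` for all unit vectors `v`.  Then the set of unit
vectors `v` for which `B_v` fails to be a linear isomorphism is finite. -/
theorem stmt2 {n : ℕ} {T W : Type*}
    [NormedAddCommGroup T] [InnerProductSpace ℝ T] [FiniteDimensional ℝ T]
    [NormedAddCommGroup W] [InnerProductSpace ℝ W] [FiniteDimensional ℝ W]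
    (hT : Module.finrank ℝ T = n) (hW : Module.finrank ℝ W = n)
    (B : EuclideanSpace ℝ (Fin 2) →ₗ[ℝ] (T →ₗ[ℝ] W))
    (j : EuclideanSpace ℝ (Fin 2) → EuclideanSpace ℝ (Fin 2))
    (hj : ∀ v : EuclideanSpace ℝ (Fin 2), j v = ![-(v 1), v 0])
    (hLag : ∀ v : EuclideanSpace ℝ (Fin 2), ‖v‖ = 1 →
      (adjoint (B v)) ∘ₗ (B (j v)) = (adjoint (B (j v))) ∘ₗ (B v))
    (hIso : ∀ v : EuclideanSpace ℝ (Fin 2), ‖v‖ = 1 →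
      (adjoint (B v)) ∘ₗ (B v) + (adjoint (B (j v))) ∘ₗ (B (j v)) = LinearMap.id) :
    {v : EuclideanSpace ℝ (Fin 2) | ‖v‖ = 1 ∧ ¬ Function.Bijective (B v)}.Finite := by
  set S := {v : EuclideanSpace ℝ (Fin 2) | ‖v‖ = 1 ∧ ¬ Function.Bijective (B v)}
  have hker_ne_bot {v} (hv : v ∈ S) : ker (B v) ≠ ⊥ := fun h =>
    have hinj := ker_eq_bot.mp h
    hv.2 ⟨hinj, (injective_iff_surjective_of_finrank_eq_finrank (hT.trans hW.symm)).mp hinj⟩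
  have hker_neg (v) : ker (B (-v)) = ker (B v) := by rw [map_neg, ker_neg]
  have hker_isOrtho {v w} (hv : ‖v‖ = 1) (hw : ‖w‖ = 1) (h₁ : w ≠ v) (h₂ : w ≠ -v) :
      ker (B v) ⟂ ker (B w) := by
    obtain ⟨c, s, hs, rfl⟩ := EuclideanSpace.exists_eq_smul_add_smul_rotation (hj v) hv hw h₁ h₂
    simpa only [map_add, map_smul] using
      ker_isOrtho_ker_smul_add_smul (hLag v hv) (hIso v hv) c hs
  refine Set.Finite.of_finite_fibers (fun v => ker (B v)) ?_ ?_
  · refine Submodule.finite_of_pairwise_isOrtho ?_ fun ⟨v, hv, h⟩ => hker_ne_bot hv h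
    rintro _ ⟨v, hv, rfl⟩ _ ⟨w, hw, rfl⟩ hvw
    exact hker_isOrtho hv.1 hw.1 (fun h => hvw (h ▸ rfl))
      fun h => hvw (h ▸ (hker_neg v).symm)
  · rintro _ ⟨v, hv, rfl⟩
    refine (Set.toFinite {v, -v}).subset fun w ⟨hw, hwv⟩ => ?_
    by_contra h
    simp only [Set.mem_insert_iff, Set.mem_singleton_iff, not_or] at h
    have hortho := hker_isOrtho hv.1 hw.1 h.1 h.2
    rw [show ker (B w) = ker (B v) from hwv] at hortho
    exact hker_ne_bot hv (Submodule.isOrtho_self.mp hortho)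
end

section
/- Let u = so(3) ⊕ so(3) with the inner product for which the six standard basis elements E_{12}, E_{13}, E_{23} in each factor are orthonormal, let k = so(2) ⊕ so(2) embedded as the span of (E_{23}, 0) and (0, E_{23}), and let p be its orthogonal complement (the set of pairs of matrices whose only nonzero entries are in positions (1,2),(1,3),(2,1),(3,1)). Then for any orthonormal pair v₁, v₂ ∈ p with v₁ in the maximal abelian subspace a (i.e., v₁ = (x₁ E_{12}', x₁' E_{12}'') with x₁² + x₁'² = 1, where E_{12}' denotes the (1,2)-elementary skew matrix), one has ‖[v₁, v₂]‖² ≤ 1, with equality if and only if v₁ and v₂ both lie entirely in one factor so(3), with v₁ the (1,2)-elementary skew matrix and v₂ = ± the (1,3)-elementary skew matrix of that factor. -/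
/-!
Since `[E₁₂, E₁₂] = 0` and `[E₁₂, E₁₃] = -E₂₃`, the bracket is `[v₁, v₂] = -(x₁ y₂ E₂₃, x₁' y₂' E₂₃)`,
whose squared norm `x₁² y₂² + x₁'² y₂'²` is an average of `y₂²` and `y₂'²` with weights
`x₁², x₁'²` summing to `1`. As `y₂² + y₂'² ≤ 1`, this is at most `1`, with equality exactly when all
the weight sits on one factor and `v₂` is `±E₁₃` in that factor.
-/

open Matrix

/-- The elementary skew-symmetric matrix `E_{ab}` with `+1` in entry `(a,b)` and `-1`
in entry `(b,a)`. -/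
noncomputable def Eskew {k : ℕ} (a b : Fin k) : Matrix (Fin k) (Fin k) ℝ :=
  Matrix.single a b 1 - Matrix.single b a 1

/-- The inner product on `so(3) ⊕ so(3)` for which the six elementary skew matrices are
orthonormal. -/
noncomputable def ip2 (X Y : Matrix (Fin 3) (Fin 3) ℝ × Matrix (Fin 3) (Fin 3) ℝ) : ℝ :=
  (1 / 2) * ((X.1ᵀ * Y.1).trace + (X.2ᵀ * Y.2).trace)

/-- The componentwise matrix commutator on `so(3) ⊕ so(3)`. -/
def brkt2 (X Y : Matrix (Fin 3) (Fin 3) ℝ × Matrix (Fin 3) (Fin 3) ℝ) :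
    Matrix (Fin 3) (Fin 3) ℝ × Matrix (Fin 3) (Fin 3) ℝ :=
  (X.1 * Y.1 - Y.1 * X.1, X.2 * Y.2 - Y.2 * X.2)

lemma smul_mul_add_sub_add_mul_smul {R A : Type*} [CommRing R] [Ring A] [Algebra R A]
    (x y z : R) (a b : A) :
    x • a * (y • a + z • b) - (y • a + z • b) * x • a = (x * z) • (a * b - b * a) := by
  simp only [mul_add, add_mul, smul_mul_smul_comm, smul_sub]
  module

lemma Eskew_mul_Eskew_sub {k : ℕ} {a b c : Fin k} (hab : a ≠ b) (hac : a ≠ c) (hbc : b ≠ c) :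
    Eskew a b * Eskew a c - Eskew a c * Eskew a b = -Eskew b c := by
  simp only [Eskew, mul_sub, sub_mul, single_mul_single_same, single_mul_single_of_ne, mul_one, ne_eq,
    not_false_eq_true, hab, hac, hbc, hab.symm, hac.symm, hbc.symm, sub_self, sub_zero, zero_sub]
  abel

lemma trace_transpose_Eskew_mul_self {k : ℕ} {a b : Fin k} (hab : a ≠ b) :
    ((Eskew a b)ᵀ * Eskew a b).trace = 2 := by
  simp only [Eskew, transpose_sub, transpose_single, mul_sub, sub_mul, single_mul_single_same,
    single_mul_single_of_ne, mul_one, ne_eq, not_false_eq_true, hab, hab.symm, sub_zero, zero_sub,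
    trace_neg, trace_single_eq_same, trace_sub]
  norm_num

lemma ip2_smul_Eskew_self {a b : Fin 3} (hab : a ≠ b) (s t : ℝ) :
    ip2 (s • Eskew a b, t • Eskew a b) (s • Eskew a b, t • Eskew a b) = s ^ 2 + t ^ 2 := by
  simp only [ip2, transpose_smul, smul_mul_smul_comm, trace_smul, trace_transpose_Eskew_mul_self hab,
    smul_eq_mul]
  ring

lemma ip2_brkt2_self (x₁ x₁' x₂ y₂ x₂' y₂' : ℝ) :
    ip2 (brkt2 (x₁ • Eskew (0 : Fin 3) 1, x₁' • Eskew 0 1)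
        (x₂ • Eskew 0 1 + y₂ • Eskew 0 2, x₂' • Eskew 0 1 + y₂' • Eskew 0 2))
      (brkt2 (x₁ • Eskew 0 1, x₁' • Eskew 0 1)
        (x₂ • Eskew 0 1 + y₂ • Eskew 0 2, x₂' • Eskew 0 1 + y₂' • Eskew 0 2)) =
      x₁ ^ 2 * y₂ ^ 2 + x₁' ^ 2 * y₂' ^ 2 := by
  have hcomm : Eskew (0 : Fin 3) 1 * Eskew 0 2 - Eskew 0 2 * Eskew 0 1 = (-1 : ℝ) • Eskew 1 2 := by
    rw [Eskew_mul_Eskew_sub (by decide) (by decide) (by decide), neg_one_smul]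
  simp only [brkt2, smul_mul_add_sub_add_mul_smul, hcomm, smul_smul]
  rw [ip2_smul_Eskew_self (by decide)]
  ring

lemma mul_add_mul_le_one {a b q r : ℝ} (ha : 0 ≤ a) (hb : 0 ≤ b) (hq : 0 ≤ q) (hr : 0 ≤ r)
    (hab : a + b = 1) (hqr : q + r ≤ 1) : a * q + b * r ≤ 1 := by
  nlinarith [mul_nonneg ha hr, mul_nonneg hb hq]

lemma mul_add_mul_eq_one_iff {a b q r : ℝ} (ha : 0 ≤ a) (hb : 0 ≤ b) (hq : 0 ≤ q) (hr : 0 ≤ r)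
    (hab : a + b = 1) (hqr : q + r ≤ 1) :
    a * q + b * r = 1 ↔ (a = 1 ∧ q = 1) ∨ (b = 1 ∧ r = 1) := by
  constructor
  · intro h
    have hdefect : a * (1 - q) + b * (1 - r) = 0 := by linear_combination hab - h
    obtain ⟨haq, hbr⟩ := (add_eq_zero_iff_of_nonneg (mul_nonneg ha (by linarith))
      (mul_nonneg hb (by linarith))).1 hdefect
    rcases mul_eq_zero.1 haq with rfl | hq1
    · obtain rfl : b = 1 := by linarith
      exact Or.inr ⟨rfl, by linarith⟩
    · obtain rfl : b = 0 := by simpa [show r = 0 by linarith] using hbr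
      exact Or.inl ⟨by linarith, by linarith⟩
  · rintro (⟨rfl, rfl⟩ | ⟨rfl, rfl⟩) <;> nlinarith

lemma sq_eq_one_iff_of_sq_add_sq_eq_one {x x' : ℝ} (hx : 0 ≤ x) (h : x ^ 2 + x' ^ 2 = 1) :
    x ^ 2 = 1 ↔ x = 1 ∧ x' = 0 := by
  rw [pow_eq_one_iff_of_nonneg hx two_ne_zero]
  constructor
  · rintro rfl
    exact ⟨rfl, by simpa using h⟩
  · exact And.left

lemma sq_eq_one_iff_of_sum_sq_eq_one {y s₁ s₂ s₃ : ℝ} (h : y ^ 2 + (s₁ ^ 2 + s₂ ^ 2 + s₃ ^ 2) = 1) :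
    y ^ 2 = 1 ↔ (y = 1 ∨ y = -1) ∧ s₁ = 0 ∧ s₂ = 0 ∧ s₃ = 0 := by
  rw [← sq_eq_one_iff]
  constructor
  · intro hy
    have hs : s₁ ^ 2 + s₂ ^ 2 + s₃ ^ 2 = 0 := by linarith
    exact ⟨hy, by nlinarith, by nlinarith, by nlinarith⟩
  · exact And.left

lemma sq_mul_sq_add_sq_mul_sq_eq_one_iff {x₁ x₁' x₂ y₂ x₂' y₂' : ℝ} (hx₁ : 0 ≤ x₁) (hx₁' : 0 ≤ x₁')
    (hv₁ : x₁ ^ 2 + x₁' ^ 2 = 1) (hv₂ : x₂ ^ 2 + y₂ ^ 2 + x₂' ^ 2 + y₂' ^ 2 = 1) :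
    x₁ ^ 2 * y₂ ^ 2 + x₁' ^ 2 * y₂' ^ 2 = 1 ↔
      x₁ = 1 ∧ x₁' = 0 ∧ (x₂ = 0 ∧ y₂ = 1 ∧ x₂' = 0 ∧ y₂' = 0 ∨ x₂ = 0 ∧ y₂ = -1 ∧ x₂' = 0 ∧ y₂' = 0) ∨
      x₁ = 0 ∧ x₁' = 1 ∧ (x₂ = 0 ∧ y₂ = 0 ∧ x₂' = 0 ∧ y₂' = 1 ∨ x₂ = 0 ∧ y₂ = 0 ∧ x₂' = 0 ∧ y₂' = -1) := by
  rw [mul_add_mul_eq_one_iff (sq_nonneg _) (sq_nonneg _) (sq_nonneg _) (sq_nonneg _) hv₁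
      (by linarith [sq_nonneg x₂, sq_nonneg x₂']),
    sq_eq_one_iff_of_sq_add_sq_eq_one hx₁ hv₁,
    sq_eq_one_iff_of_sq_add_sq_eq_one (x' := x₁) hx₁' (by linarith),
    sq_eq_one_iff_of_sum_sq_eq_one (s₁ := x₂) (s₂ := x₂') (s₃ := y₂') (by linarith),
    sq_eq_one_iff_of_sum_sq_eq_one (s₁ := x₂) (s₂ := x₂') (s₃ := y₂) (by linarith)]
  tauto

theorem stmt5_general (x₁ x₁' x₂ y₂ x₂' y₂' : ℝ)
    (hx₁ : 0 ≤ x₁) (hx₁' : 0 ≤ x₁') (hv₁ : x₁ ^ 2 + x₁' ^ 2 = 1)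
    (hv₂ : x₂ ^ 2 + y₂ ^ 2 + x₂' ^ 2 + y₂' ^ 2 = 1)
    (v₁ : Matrix (Fin 3) (Fin 3) ℝ × Matrix (Fin 3) (Fin 3) ℝ)
    (v₂ : Matrix (Fin 3) (Fin 3) ℝ × Matrix (Fin 3) (Fin 3) ℝ)
    (hv₁def : v₁ = (x₁ • Eskew 0 1, x₁' • Eskew 0 1))
    (hv₂def : v₂ = (x₂ • Eskew 0 1 + y₂ • Eskew 0 2, x₂' • Eskew 0 1 + y₂' • Eskew 0 2)) :
    ip2 (brkt2 v₁ v₂) (brkt2 v₁ v₂) ≤ 1 ∧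
    (ip2 (brkt2 v₁ v₂) (brkt2 v₁ v₂) = 1 ↔
      ((v₁ = (Eskew 0 1, 0) ∧ (v₂ = (Eskew 0 2, 0) ∨ v₂ = (-(Eskew 0 2), 0))) ∨
       (v₁ = (0, Eskew 0 1) ∧ (v₂ = (0, Eskew 0 2) ∨ v₂ = (0, -(Eskew 0 2)))))) := by
  subst hv₁def hv₂def
  rw [ip2_brkt2_self]
  refine ⟨mul_add_mul_le_one (sq_nonneg _) (sq_nonneg _) (sq_nonneg _) (sq_nonneg _) hv₁
    (by linarith [sq_nonneg x₂, sq_nonneg x₂']), ?_⟩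
  rw [sq_mul_sq_add_sq_mul_sq_eq_one_iff hx₁ hx₁' hv₁ hv₂]
  simp [Prod.ext_iff, ← Matrix.ext_iff, Fin.forall_fin_succ, Eskew, single_apply, neg_eq_iff_eq_neg,
    and_assoc]

/-- for the symmetric pair `(SO(3)×SO(3), SO(2)×SO(2))`, with
`v₁ = (x₁ E₁₂, x₁' E₁₂) ∈ a` a unit vector (`x₁, x₁' ≥ 0`) and `v₂ ∈ p` a unit vector
orthogonal to `v₁`, one has `‖[v₁,v₂]‖² ≤ 1`, with equality iff `v₁` and `v₂` lie
entirely in one factor `so(3)`, with `v₁ = E₁₂` and `v₂ = ±E₁₃` of that factor. -/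
theorem stmt5 (x₁ x₁' x₂ y₂ x₂' y₂' : ℝ)
    (hx₁ : 0 ≤ x₁) (hx₁' : 0 ≤ x₁') (hv₁ : x₁ ^ 2 + x₁' ^ 2 = 1)
    (hv₂ : x₂ ^ 2 + y₂ ^ 2 + x₂' ^ 2 + y₂' ^ 2 = 1)
    (v₁ : Matrix (Fin 3) (Fin 3) ℝ × Matrix (Fin 3) (Fin 3) ℝ)
    (v₂ : Matrix (Fin 3) (Fin 3) ℝ × Matrix (Fin 3) (Fin 3) ℝ)
    (hv₁def : v₁ = (x₁ • Eskew 0 1, x₁' • Eskew 0 1))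
    (hv₂def : v₂ = (x₂ • Eskew 0 1 + y₂ • Eskew 0 2, x₂' • Eskew 0 1 + y₂' • Eskew 0 2))
    (horth : ip2 v₁ v₂ = 0) :
    ip2 (brkt2 v₁ v₂) (brkt2 v₁ v₂) ≤ 1 ∧
    (ip2 (brkt2 v₁ v₂) (brkt2 v₁ v₂) = 1 ↔
      ((v₁ = (Eskew 0 1, 0) ∧ (v₂ = (Eskew 0 2, 0) ∨ v₂ = (-(Eskew 0 2), 0))) ∨
       (v₁ = (0, Eskew 0 1) ∧ (v₂ = (0, Eskew 0 2) ∨ v₂ = (0, -(Eskew 0 2)))))) :=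
  stmt5_general x₁ x₁' x₂ y₂ x₂' y₂' hx₁ hx₁' hv₁ hv₂ v₁ v₂ hv₁def hv₂def
end

section
/- Let V_m be the space of complex homogeneous polynomials of degree m in z₀, z₁, with the SU(2)-action (ρ_m(g)f)(z) = f(z·g). Let K̃₀ ⊂ SU(2) be the quaternion group of order 8 generated by ±I, ±[[0,−1],[1,0]], ±[[i,0],[0,−i]], ±[[0,i],[i,0]]. Then the fixed subspace (V_m)^{K̃₀} is nonzero if and only if m is even and m ≥ 4 (or m = 0). -/
/-!
Since `-1 ∈ Q8` acts on `V_m` by `(-1)^m`, invariants live in even degree. In degree 2,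
`diag(i, -i)` multiplies `z₀^p z₁^q` by `i^p (-i)^q`, which leaves only `z₀ z₁`, and the
rotation `[[0,-1],[1,0]]` negates it. Conversely, `z₀ z₁` and `z₀⁴ - z₁⁴` are multiplied by the
same sign `±1` by every element of `Q8`, so `(z₀ z₁)^a (z₀⁴ - z₁⁴)^b` is invariant when `a + b`
is even; these have degree `2a + 4b`, which takes every value `0, 4, 6, 8, …`.
-/

open MvPolynomial

/-- The action of a `2×2` complex matrix `g` on polynomials in `z₀, z₁` given by
`(ρ(g) f)(z) = f(z·g)`. -/
noncomputable def actPoly (g : Matrix (Fin 2) (Fin 2) ℂ) (f : MvPolynomial (Fin 2) ℂ) :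
    MvPolynomial (Fin 2) ℂ :=
  MvPolynomial.aeval (fun k : Fin 2 => ∑ i : Fin 2, MvPolynomial.C (g i k) * X i) f

/-- The quaternion group of order `8` in `SU(2)`, generated by
`±I`, `±[[0,−1],[1,0]]`, `±[[i,0],[0,−i]]`, `±[[0,i],[i,0]]`. -/
noncomputable def Q8 : Set (Matrix (Fin 2) (Fin 2) ℂ) :=
  {1, -1, !![0, -1; 1, 0], -(!![0, -1; 1, 0]),
   !![Complex.I, 0; 0, -Complex.I], -(!![Complex.I, 0; 0, -Complex.I]),
   !![0, Complex.I; Complex.I, 0], -(!![0, Complex.I; Complex.I, 0])}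

theorem MvPolynomial.coeff_aeval_C_mul_X {σ R : Type*} [Fintype σ] [CommSemiring R]
    (c : σ → R) (f : MvPolynomial σ R) (d : σ →₀ ℕ) :
    coeff d (aeval (fun k => C (c k) * X k) f) = (∏ i, c i ^ d i) * coeff d f := by
  classical
  induction f using MvPolynomial.induction_on' with
  | add p q hp hq => simp only [map_add, coeff_add, hp, hq, mul_add]
  | monomial e a =>
    have : aeval (fun k => C (c k) * X k) (monomial e a) = monomial e (a * ∏ i, c i ^ e i) := by
      rw [aeval_monomial, monomial_eq, Finsupp.prod_pow e (fun i => C (c i) * X i),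
        Finsupp.prod_pow e X]
      simp only [mul_pow, Finset.prod_mul_distrib, ← map_pow, ← map_prod, algebraMap_eq, map_mul]
      ring
    rw [this, coeff_monomial, coeff_monomial]
    split_ifs with h
    · subst h; ring
    · rw [mul_zero]

theorem actPoly_diagonal (c : Fin 2 → ℂ) (f : MvPolynomial (Fin 2) ℂ) :
    actPoly (Matrix.diagonal c) f = aeval (fun k => C (c k) * X k) f := by
  have : (fun k => ∑ i, C (Matrix.diagonal c i k) * X i) = fun k => C (c k) * X k := by
    ext1 k
    fin_cases k <;> simp [Matrix.diagonal_apply]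
  rw [actPoly, this]

theorem coeff_eq_zero_of_actPoly_diagonal_eq_self {c : Fin 2 → ℂ} {f : MvPolynomial (Fin 2) ℂ}
    (hf : actPoly (Matrix.diagonal c) f = f) {d : Fin 2 →₀ ℕ} (hd : ∏ i, c i ^ d i ≠ 1) :
    coeff d f = 0 := by
  have h := congrArg (coeff d) hf
  rw [actPoly_diagonal, coeff_aeval_C_mul_X] at h
  have : (∏ i, c i ^ d i - 1) * coeff d f = 0 := by linear_combination h
  exact (mul_eq_zero.mp this).resolve_left (sub_ne_zero.mpr hd)

theorem actPoly_mul (g : Matrix (Fin 2) (Fin 2) ℂ) (p q : MvPolynomial (Fin 2) ℂ) :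
    actPoly g (p * q) = actPoly g p * actPoly g q :=
  map_mul _ p q

theorem actPoly_pow (g : Matrix (Fin 2) (Fin 2) ℂ) (p : MvPolynomial (Fin 2) ℂ) (n : ℕ) :
    actPoly g (p ^ n) = actPoly g p ^ n :=
  map_pow _ p n

theorem actPoly_C (g : Matrix (Fin 2) (Fin 2) ℂ) (a : ℂ) : actPoly g (C a) = C a :=
  aeval_C _ a

theorem Finsupp.degree_fin_two (d : Fin 2 →₀ ℕ) : d.degree = d 0 + d 1 := by
  simp [Finsupp.degree_eq_sum]

theorem even_of_actPoly_neg_one_eq_self {f : MvPolynomial (Fin 2) ℂ} {m : ℕ}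
    (hf : f.IsHomogeneous m) (hne : f ≠ 0) (hfix : actPoly (-1) f = f) : Even m := by
  rw [show (-1 : Matrix (Fin 2) (Fin 2) ℂ) = Matrix.diagonal fun _ => -1 by
    rw [← Matrix.diagonal_one, Matrix.diagonal_neg]] at hfix
  by_contra hodd
  refine hne (MvPolynomial.ext _ _ fun d => ?_)
  rw [coeff_zero]
  by_cases hd : d.degree = m
  · refine coeff_eq_zero_of_actPoly_diagonal_eq_self hfix ?_
    rw [Finset.prod_pow_eq_pow_sum, ← Finsupp.degree_eq_sum, hd,
      (Nat.not_even_iff_odd.mp hodd).neg_one_pow]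
    norm_num
  · exact hf.coeff_eq_zero hd

theorem actPoly_rotation_X_zero_mul_X_one :
    actPoly !![0, -1; 1, 0] (X 0 * X 1 : MvPolynomial (Fin 2) ℂ) = -(X 0 * X 1) := by
  simp [actPoly, Fin.sum_univ_two, mul_comm]

theorem eq_zero_of_isHomogeneous_two {f : MvPolynomial (Fin 2) ℂ} (hf : f.IsHomogeneous 2)
    (hD : actPoly !![Complex.I, 0; 0, -Complex.I] f = f) (hJ : actPoly !![0, -1; 1, 0] f = f) :
    f = 0 := by
  rw [← Matrix.diagonal_vec2] at hD
  set d₁₁ : Fin 2 →₀ ℕ := Finsupp.single 0 1 + Finsupp.single 1 1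
  have hsupp : ∀ d ∈ f.support, d = d₁₁ := by
    intro d hd
    have hdeg : d 0 + d 1 = 2 := by
      rw [← Finsupp.degree_fin_two]
      by_contra h
      exact mem_support_iff.mp hd (hf.coeff_eq_zero h)
    have hchar : ∏ i, ![Complex.I, -Complex.I] i ^ d i = 1 := by
      by_contra h
      exact mem_support_iff.mp hd (coeff_eq_zero_of_actPoly_diagonal_eq_self hD h)
    simp only [Fin.prod_univ_two, Matrix.cons_val_zero, Matrix.cons_val_one] at hchar
    obtain ⟨h0, h1⟩ : d 0 = 1 ∧ d 1 = 1 := by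
      have : d 0 ≤ 2 := by omega
      interval_cases h : d 0
      · rw [show d 1 = 2 by omega] at hchar
        norm_num at hchar
      · omega
      · rw [show d 1 = 0 by omega] at hchar
        norm_num at hchar
    ext i
    fin_cases i <;> simp [d₁₁, h0, h1]
  have hf₁₁ : f = C (coeff d₁₁ f) * (X 0 * X 1) := by
    rw [X, X, monomial_mul, C_mul_monomial, mul_one, mul_one]
    exact eq_monomial_of_support_subset_singleton hsupp
  rw [hf₁₁, actPoly_mul, actPoly_C, actPoly_rotation_X_zero_mul_X_one, mul_neg] at hJ
  exact hf₁₁.trans (self_eq_neg.mp hJ.symm)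

theorem actPoly_sign_of_mem_Q8 {g : Matrix (Fin 2) (Fin 2) ℂ} (hg : g ∈ Q8) :
    ∃ ε : ℂ, ε ^ 2 = 1 ∧ actPoly g (X 0 * X 1) = C ε * (X 0 * X 1) ∧
      actPoly g (X 0 ^ 4 - X 1 ^ 4) = C ε * (X 0 ^ 4 - X 1 ^ 4) := by
  have hI : (C Complex.I : MvPolynomial (Fin 2) ℂ) ^ 2 = -1 := by
    rw [← C_pow, Complex.I_sq, C_neg, C_1]
  have hI4 : (C Complex.I : MvPolynomial (Fin 2) ℂ) ^ 4 = 1 := by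
    rw [show 4 = 2 * 2 from rfl, pow_mul, hI, neg_one_sq]
  simp only [Q8, Set.mem_insert_iff, Set.mem_singleton_iff] at hg
  -- `ε = 1` for the diagonal elements of `Q8` and `ε = -1` for the antidiagonal ones.
  rcases hg with rfl | rfl | rfl | rfl | rfl | rfl | rfl | rfl
  all_goals
    first
    | refine ⟨1, one_pow 2, ?_, ?_⟩ <;>
        simp [actPoly, Fin.sum_univ_two] <;> ring_nf <;> simp only [hI, hI4] <;> ring1
    | refine ⟨-1, neg_one_sq, ?_, ?_⟩ <;>
        simp [actPoly, Fin.sum_univ_two] <;> ring_nf <;> simp only [hI, hI4] <;> ring1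

theorem X_zero_pow_four_sub_X_one_pow_four_ne_zero :
    (X 0 ^ 4 - X 1 ^ 4 : MvPolynomial (Fin 2) ℂ) ≠ 0 := fun h => by
  simpa using congrArg (eval ![1, 0]) h

theorem exists_isHomogeneous_fixed_of_even_add {a b m : ℕ} (hab : Even (a + b)) (hm : 2 * a + 4 * b = m) :
    ∃ f : MvPolynomial (Fin 2) ℂ, f.IsHomogeneous m ∧ f ≠ 0 ∧
      ∀ g ∈ Q8, actPoly g f = f := by
  refine ⟨(X 0 * X 1) ^ a * (X 0 ^ 4 - X 1 ^ 4) ^ b, ?_, ?_, fun g hg => ?_⟩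
  · have hu := (isHomogeneous_X ℂ (0 : Fin 2)).mul (isHomogeneous_X ℂ 1)
    have hv := (isHomogeneous_X_pow (R := ℂ) (0 : Fin 2) 4).sub (isHomogeneous_X_pow 1 4)
    simpa [← hm, mul_comm] using (hu.pow a).mul (hv.pow b)
  · exact mul_ne_zero (pow_ne_zero _ (mul_ne_zero (X_ne_zero _) (X_ne_zero _)))
      (pow_ne_zero _ X_zero_pow_four_sub_X_one_pow_four_ne_zero)
  · obtain ⟨ε, hε, hu, hv⟩ := actPoly_sign_of_mem_Q8 hg
    obtain ⟨k, hk⟩ := hab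
    have hεab : (C ε ^ a * C ε ^ b : MvPolynomial (Fin 2) ℂ) = 1 := by
      rw [← pow_add, hk, ← two_mul, pow_mul, ← C_pow, hε, C_1, one_pow]
    rw [actPoly_mul, actPoly_pow, actPoly_pow, hu, hv, mul_pow (C ε), mul_pow (C ε)]
    linear_combination (X 0 * X 1) ^ a * (X 0 ^ 4 - X 1 ^ 4) ^ b * hεab

/-- the subspace of `V_m` (homogeneous polynomials of degree `m`) fixed by
the quaternion group `K̃₀` of order `8` is nonzero iff `m = 0` or (`m` even and `m ≥ 4`). -/
theorem stmt10 (m : ℕ) :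
    (∃ f : MvPolynomial (Fin 2) ℂ, f.IsHomogeneous m ∧ f ≠ 0 ∧
      ∀ g ∈ Q8, actPoly g f = f) ↔ (m = 0 ∨ (Even m ∧ 4 ≤ m)) := by
  constructor
  · rintro ⟨f, hf, hne, hfix⟩
    have hm : Even m := even_of_actPoly_neg_one_eq_self hf hne (hfix _ (by simp [Q8]))
    have hm2 : m ≠ 2 := by
      rintro rfl
      exact hne (eq_zero_of_isHomogeneous_two hf (hfix _ (by simp [Q8])) (hfix _ (by simp [Q8])))
    obtain ⟨k, rfl⟩ := hm
    by_cases hk : k = 0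
    · exact Or.inl (by omega)
    · exact Or.inr ⟨⟨k, rfl⟩, by omega⟩
  · intro h
    obtain ⟨n, rfl⟩ : Even m := h.elim (fun h => h ▸ ⟨0, rfl⟩) And.left
    have hn : n ≠ 1 := by omega
    rcases Nat.even_or_odd n with hn' | hn'
    · exact exists_isHomogeneous_fixed_of_even_add (a := n) (b := 0) (m := n + n) (by simpa) (by omega)
    · have : 3 ≤ n := by obtain ⟨j, rfl⟩ := hn'; omega
      refine exists_isHomogeneous_fixed_of_even_add (a := n - 2) (b := 1) (m := n + n) ?_ (by omega)
      rw [show n - 2 + 1 = n - 1 by omega]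
      exact Nat.Odd.sub_odd hn' odd_one
end
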